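/- arXiv:2209.08854 — 3 statements merged into one kernel-verified Lean document; each statement's English description precedes it below -/
import Mathlib

section
/- Let C be a 4×4 real symmetric matrix with block form [[P, v],[vᵀ, N]] where P ∈ ℝ³ˣ³ is symmetric, v ∈ ℝ³, and N > 0. Let T = [[R, t],[0, 1]] be a homogeneous pose matrix with RᵀR = I. Then A(T C Tᵀ) = R · A(C) · Rᵀ, where A(C) = (1/N)P − (1/N²)v vᵀ (note that the (4,4)-entry of T C Tᵀ is again N). -/
/-!
Conjugating by `T` transforms the blocks of `C` as `N ↦ N`, `v ↦ R v + N t` and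
`P ↦ R P Rᵀ + (R v) tᵀ + t (R v)ᵀ + N t tᵀ`: the entries of `T C Tᵀ` are the values of the bilinear
form of `C` on the rows `(Rᵢ, tᵢ)` and `(0, 1)` of `T`. Now `A(C)` is the covariance of a point cluster
with moments `N`, `v`, `P`; the translation by `t` drops out of it, and the rotation conjugates it.
-/

open Matrix

noncomputable section

/-- Homogeneous coordinates of a point in `ℝ³`. -/
def homog (x : Fin 3 → ℝ) : Fin 4 → ℝ := Fin.snoc x 1

/-- The point cluster coordinate `ℜ(p) = Σₖ (pₖ,1)(pₖ,1)ᵀ` of a finite family of points. -/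
def cluster {n : ℕ} (p : Fin n → Fin 3 → ℝ) : Matrix (Fin 4) (Fin 4) ℝ :=
  ∑ k, vecMulVec (homog (p k)) (homog (p k))

/-- The homogeneous pose matrix `T = [[R, t],[0, 1]]`. -/
def pose (R : Matrix (Fin 3) (Fin 3) ℝ) (t : Fin 3 → ℝ) : Matrix (Fin 4) (Fin 4) ℝ :=
  Matrix.reindex finSumFinEquiv finSumFinEquiv
    (Matrix.fromBlocks R (Matrix.of fun i (_ : Fin 1) => t i)
      (0 : Matrix (Fin 1) (Fin 3) ℝ) (1 : Matrix (Fin 1) (Fin 1) ℝ))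

/-- The upper-left `3×3` block `P` of a `4×4` matrix. -/
def Pblk (C : Matrix (Fin 4) (Fin 4) ℝ) : Matrix (Fin 3) (Fin 3) ℝ :=
  Matrix.of fun i j => C i.castSucc j.castSucc

/-- The upper-right `3×1` block `v` of a `4×4` matrix. -/
def vblk (C : Matrix (Fin 4) (Fin 4) ℝ) : Fin 3 → ℝ :=
  fun i => C i.castSucc (Fin.last 3)

/-- The `(4,4)` entry `N` of a `4×4` matrix. -/
def Nent (C : Matrix (Fin 4) (Fin 4) ℝ) : ℝ := C (Fin.last 3) (Fin.last 3)

/-- `A(C) = (1/N) P − (1/N²) v vᵀ`. -/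
def Amat (C : Matrix (Fin 4) (Fin 4) ℝ) : Matrix (Fin 3) (Fin 3) ℝ :=
  (1 / Nent C) • Pblk C - (1 / (Nent C) ^ 2) • vecMulVec (vblk C) (vblk C)

section CovOfMoments

variable {m n K : Type*} [Field K]

def covOfMoments (N : K) (P : Matrix m m K) (v : m → K) : Matrix m m K :=
  (1 / N) • P - (1 / N ^ 2) • vecMulVec v v

theorem covOfMoments_translate {N : K} (hN : N ≠ 0) (P : Matrix m m K) (v t : m → K) :
    covOfMoments N (P + vecMulVec v t + vecMulVec t v + N • vecMulVec t t) (v + N • t) =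
      covOfMoments N P v := by
  ext i j
  simp only [covOfMoments, Matrix.sub_apply, Matrix.smul_apply, Matrix.add_apply, vecMulVec_apply,
    Pi.add_apply, Pi.smul_apply, smul_eq_mul]
  field_simp
  ring

theorem mul_covOfMoments_mul_transpose [Fintype m] (R : Matrix n m K) (N : K) (P : Matrix m m K)
    (v : m → K) : R * covOfMoments N P v * Rᵀ = covOfMoments N (R * P * Rᵀ) (R *ᵥ v) := by
  rw [covOfMoments, covOfMoments, Matrix.mul_sub, Matrix.sub_mul, Matrix.mul_smul, Matrix.smul_mul,
    Matrix.mul_smul, Matrix.smul_mul, mul_vecMulVec, vecMulVec_mul, vecMul_transpose]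

end CovOfMoments

theorem Amat_eq_covOfMoments (C : Matrix (Fin 4) (Fin 4) ℝ) :
    Amat C = covOfMoments (Nent C) (Pblk C) (vblk C) :=
  rfl

theorem snoc_dotProduct_mulVec_snoc (C : Matrix (Fin 4) (Fin 4) ℝ) (x y : Fin 3 → ℝ) (a b : ℝ) :
    Fin.snoc x a ⬝ᵥ C *ᵥ Fin.snoc y b = x ⬝ᵥ Pblk C *ᵥ y + (x ⬝ᵥ vblk C) * b
      + a * ((fun j => C (Fin.last 3) j.castSucc) ⬝ᵥ y) + a * b * Nent C := by
  simp only [dotProduct, mulVec, Fin.sum_univ_castSucc, Fin.snoc_castSucc, Fin.snoc_last, Pblk, vblk,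
    Nent, of_apply, mul_add, Finset.sum_add_distrib, Finset.mul_sum]
  -- `ring` treats the sums as atoms, so their summands are normalised first
  simp only [mul_comm, mul_left_comm]
  ring

theorem lastRow_eq_vblk {C : Matrix (Fin 4) (Fin 4) ℝ} (hC : C.IsSymm) :
    (fun j => C (Fin.last 3) j.castSucc) = vblk C :=
  funext fun _ => hC.apply _ _

section Pose

variable (R : Matrix (Fin 3) (Fin 3) ℝ) (t : Fin 3 → ℝ)

theorem pose_castSucc (i : Fin 3) : pose R t i.castSucc = Fin.snoc (R i) (t i) := by
  ext j
  refine Fin.lastCases ?_ (fun j => ?_) j <;>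
    simp only [pose, reindex_apply, submatrix_apply, finSumFinEquiv_symm_last,
      finSumFinEquiv_symm_apply_castSucc, Fin.snoc_last, Fin.snoc_castSucc] <;>
    simp

theorem pose_last : pose R t (Fin.last 3) = Fin.snoc 0 1 := by
  ext j
  refine Fin.lastCases ?_ (fun j => ?_) j <;>
    simp only [pose, reindex_apply, submatrix_apply, finSumFinEquiv_symm_last,
      finSumFinEquiv_symm_apply_castSucc, Fin.snoc_last, Fin.snoc_castSucc] <;>
    simp

variable {C : Matrix (Fin 4) (Fin 4) ℝ}

theorem Nent_pose_mul_mul_transpose : Nent (pose R t * C * (pose R t)ᵀ) = Nent C := by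
  rw [Nent, mul_mul_apply, transpose_transpose, pose_last, snoc_dotProduct_mulVec_snoc]
  simp

theorem vblk_pose_mul_mul_transpose :
    vblk (pose R t * C * (pose R t)ᵀ) = R *ᵥ vblk C + Nent C • t := by
  ext i
  rw [vblk, mul_mul_apply, transpose_transpose, pose_last, pose_castSucc,
    snoc_dotProduct_mulVec_snoc]
  simp [mulVec, mul_comm]

theorem Pblk_pose_mul_mul_transpose (hC : C.IsSymm) :
    Pblk (pose R t * C * (pose R t)ᵀ) = R * Pblk C * Rᵀ + vecMulVec (R *ᵥ vblk C) t
      + vecMulVec t (R *ᵥ vblk C) + Nent C • vecMulVec t t := by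
  ext i j
  rw [Pblk, of_apply, mul_mul_apply, transpose_transpose, pose_castSucc, pose_castSucc,
    snoc_dotProduct_mulVec_snoc, lastRow_eq_vblk hC]
  simp [mulVec, vecMulVec_apply, mul_mul_apply, dotProduct_comm]
  ring

end Pose

theorem Amat_conj_general (C : Matrix (Fin 4) (Fin 4) ℝ) (hC : C.IsSymm)
    (hN : 0 < Nent C)
    (R : Matrix (Fin 3) (Fin 3) ℝ) (t : Fin 3 → ℝ) :
    Amat (pose R t * C * (pose R t)ᵀ) = R * Amat C * Rᵀ := by
  rw [Amat_eq_covOfMoments, Amat_eq_covOfMoments, Nent_pose_mul_mul_transpose,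
    vblk_pose_mul_mul_transpose, Pblk_pose_mul_mul_transpose R t hC,
    covOfMoments_translate hN.ne', mul_covOfMoments_mul_transpose]

/-- Key conjugation identity in the proof of Theorem 3: `A(T C Tᵀ) = R A(C) Rᵀ`. -/
theorem Amat_conj (C : Matrix (Fin 4) (Fin 4) ℝ) (hC : C.IsSymm)
    (hN : 0 < Nent C)
    (R : Matrix (Fin 3) (Fin 3) ℝ) (t : Fin 3 → ℝ) (hR : Rᵀ * R = 1) :
    Amat (pose R t * C * (pose R t)ᵀ) = R * Amat C * Rᵀ :=
  Amat_conj_general C hC hN R t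

end
end

section
/- Let C be a 4×4 real symmetric matrix with block form [[P, v],[vᵀ, N]] where P ∈ ℝ³ˣ³ is symmetric, v ∈ ℝ³, and N > 0, and let T₀ = [[R, t],[0, 1]] be a homogeneous pose matrix with RᵀR = I and det R = 1. Then for each l ∈ {1,2,3}, the l-th largest eigenvalue of the symmetric matrix A(T₀ C T₀ᵀ) equals the l-th largest eigenvalue of A(C); that is, λ_l(A(T₀ C T₀ᵀ)) = λ_l(A(C)). -/
/-!
Conjugating `C = [[P, v], [vᵀ, N]]` by `T₀ = [[R, t], [0, 1]]` keeps `N`, sends `v` to `R v + N t`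
and `P` to `R P Rᵀ + (R v) tᵀ + t (R v)ᵀ + N t tᵀ`. In `A = P / N - v vᵀ / N²` all terms involving
`t` cancel, so `A(T₀ C T₀ᵀ) = R A(C) Rᵀ`. Since `Rᵀ R = 1`, this conjugation preserves the
characteristic polynomial, which determines the eigenvalues of a symmetric matrix.
-/

open Matrix

noncomputable section

/-- The `l`-th largest eigenvalue (`l = 0` being the largest) of a real symmetric
`3×3` matrix. -/
def eigDesc {A : Matrix (Fin 3) (Fin 3) ℝ} (hA : A.IsHermitian) (l : Fin 3) : ℝ :=
  (hA.eigenvalues ∘ Tuple.sort hA.eigenvalues) l.rev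

section Pose

variable (R : Matrix (Fin 3) (Fin 3) ℝ) (t : Fin 3 → ℝ)

lemma pose_apply_castSucc_castSucc (i j : Fin 3) : pose R t i.castSucc j.castSucc = R i j := by
  simp only [pose, reindex_apply, submatrix_apply, finSumFinEquiv_symm_apply_castSucc,
    fromBlocks_apply₁₁]

lemma pose_apply_castSucc_last (i : Fin 3) : pose R t i.castSucc (Fin.last 3) = t i := by
  simp only [pose, reindex_apply, submatrix_apply, finSumFinEquiv_symm_apply_castSucc,
    finSumFinEquiv_symm_last, fromBlocks_apply₁₂, of_apply]

lemma pose_apply_last_castSucc (j : Fin 3) : pose R t (Fin.last 3) j.castSucc = 0 := by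
  simp only [pose, reindex_apply, submatrix_apply, finSumFinEquiv_symm_apply_castSucc,
    finSumFinEquiv_symm_last, fromBlocks_apply₂₁, Matrix.zero_apply]

lemma pose_apply_last_last : pose R t (Fin.last 3) (Fin.last 3) = 1 := by
  simp only [pose, reindex_apply, submatrix_apply, finSumFinEquiv_symm_last, fromBlocks_apply₂₂,
    one_apply_eq]

variable (M : Matrix (Fin 4) (Fin 4) ℝ)

lemma pose_mul_apply_castSucc (i : Fin 3) (j : Fin 4) :
    (pose R t * M) i.castSucc j = ∑ a, R i a * M a.castSucc j + t i * M (Fin.last 3) j := by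
  rw [mul_apply, Fin.sum_univ_castSucc]
  simp only [pose_apply_castSucc_castSucc, pose_apply_castSucc_last]

lemma pose_mul_apply_last (j : Fin 4) : (pose R t * M) (Fin.last 3) j = M (Fin.last 3) j := by
  rw [mul_apply, Fin.sum_univ_castSucc]
  simp only [pose_apply_last_castSucc, pose_apply_last_last, zero_mul, Finset.sum_const_zero,
    one_mul, zero_add]

lemma mul_pose_transpose_apply_castSucc (i : Fin 4) (j : Fin 3) :
    (M * (pose R t)ᵀ) i j.castSucc = ∑ b, M i b.castSucc * R j b + M i (Fin.last 3) * t j := by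
  rw [mul_apply, Fin.sum_univ_castSucc]
  simp only [transpose_apply, pose_apply_castSucc_castSucc, pose_apply_castSucc_last]

lemma mul_pose_transpose_apply_last (i : Fin 4) :
    (M * (pose R t)ᵀ) i (Fin.last 3) = M i (Fin.last 3) := by
  rw [mul_apply, Fin.sum_univ_castSucc]
  simp only [transpose_apply, pose_apply_last_castSucc, pose_apply_last_last, mul_zero,
    Finset.sum_const_zero, mul_one, zero_add]

lemma Nent_pose_conj : Nent (pose R t * M * (pose R t)ᵀ) = Nent M := by
  rw [Nent, mul_pose_transpose_apply_last, pose_mul_apply_last, Nent]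

lemma vblk_pose_conj : vblk (pose R t * M * (pose R t)ᵀ) = R *ᵥ vblk M + Nent M • t := by
  ext i
  rw [vblk, mul_pose_transpose_apply_last, pose_mul_apply_castSucc]
  simp only [mulVec, dotProduct, vblk, Nent, Pi.add_apply, Pi.smul_apply, smul_eq_mul, mul_comm]

lemma Pblk_pose_conj (hM : M.IsSymm) :
    Pblk (pose R t * M * (pose R t)ᵀ) = R * Pblk M * Rᵀ + vecMulVec (R *ᵥ vblk M) t
      + vecMulVec t (R *ᵥ vblk M) + Nent M • vecMulVec t t := by
  have hsymm : ∀ b : Fin 3, M (Fin.last 3) b.castSucc = vblk M b := fun b => hM.apply _ _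
  ext i j
  simp only [Pblk, of_apply, mul_pose_transpose_apply_castSucc, pose_mul_apply_castSucc, hsymm]
  simp only [mul_apply, transpose_apply, Matrix.add_apply, Matrix.smul_apply, vecMulVec_apply,
    mulVec, dotProduct, vblk, Nent, of_apply, smul_eq_mul, add_mul, Finset.sum_add_distrib,
    Finset.sum_mul, Finset.mul_sum]
  simp only [mul_comm, mul_left_comm]
  ring

end Pose

lemma vecMulVec_mulVec_self {m n α : Type*} [Fintype n] [CommSemiring α] (A : Matrix m n α)
    (v : n → α) : vecMulVec (A *ᵥ v) (A *ᵥ v) = A * vecMulVec v v * Aᵀ := by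
  rw [mul_vecMulVec, vecMulVec_mul, vecMul_transpose]

lemma Amat_pose_conj (R : Matrix (Fin 3) (Fin 3) ℝ) (t : Fin 3 → ℝ)
    {M : Matrix (Fin 4) (Fin 4) ℝ} (hM : M.IsSymm) (hN : Nent M ≠ 0) :
    Amat (pose R t * M * (pose R t)ᵀ) = R * Amat M * Rᵀ := by
  rw [Amat, Nent_pose_conj, vblk_pose_conj, Pblk_pose_conj R t M hM, Amat]
  simp only [add_vecMulVec, vecMulVec_add, smul_vecMulVec, vecMulVec_smul, vecMulVec_mulVec_self,
    Matrix.mul_sub, Matrix.sub_mul, Matrix.mul_smul, Matrix.smul_mul, smul_add, smul_smul]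
  match_scalars <;> field_simp <;> ring

lemma charpoly_mul_mul_transpose {n R : Type*} [Fintype n] [DecidableEq n] [CommRing R]
    {U : Matrix n n R} (hU : Uᵀ * U = 1) (A : Matrix n n R) :
    (U * A * Uᵀ).charpoly = A.charpoly := by
  rw [charpoly_mul_comm, ← Matrix.mul_assoc, hU, Matrix.one_mul]

lemma eigDesc_eq_of_charpoly_eq {A B : Matrix (Fin 3) (Fin 3) ℝ} (hA : A.IsHermitian)
    (hB : B.IsHermitian) (h : A.charpoly = B.charpoly) : eigDesc hA = eigDesc hB := by
  funext l
  simp only [eigDesc, (hA.eigenvalues_eq_eigenvalues_iff hB).mpr h]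

theorem eig_Amat_invariant_general (C : Matrix (Fin 4) (Fin 4) ℝ) (hC : C.IsSymm)
    (hN : 0 < Nent C)
    (R : Matrix (Fin 3) (Fin 3) ℝ) (t : Fin 3 → ℝ)
    (hR : Rᵀ * R = 1)
    (h₁ : (Amat (pose R t * C * (pose R t)ᵀ)).IsHermitian)
    (h₂ : (Amat C).IsHermitian) :
    ∀ l : Fin 3, eigDesc h₁ l = eigDesc h₂ l := by
  refine congrFun (eigDesc_eq_of_charpoly_eq h₁ h₂ ?_)
  rw [Amat_pose_conj R t hC hN.ne', charpoly_mul_mul_transpose hR]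

/-- **Theorem 3 (invariance of the BA cost to rigid transformation).** -/
theorem eig_Amat_invariant (C : Matrix (Fin 4) (Fin 4) ℝ) (hC : C.IsSymm)
    (hN : 0 < Nent C)
    (R : Matrix (Fin 3) (Fin 3) ℝ) (t : Fin 3 → ℝ)
    (hR : Rᵀ * R = 1) (hdet : R.det = 1)
    (h₁ : (Amat (pose R t * C * (pose R t)ᵀ)).IsHermitian)
    (h₂ : (Amat C).IsHermitian) :
    ∀ l : Fin 3, eigDesc h₁ l = eigDesc h₂ l :=
  eig_Amat_invariant_general C hC hN R t hR h₁ h₂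

end
end

section
/- Let p₁,…,p_N ∈ ℝ³ with N > 0, centroid p̄ = (1/N)Σₖ pₖ and scatter matrix A = (1/N)Σₖ (pₖ−p̄)(pₖ−p̄)ᵀ, with eigenvalues λ₁ ≥ λ₂ ≥ λ₃. Then: (i) for every unit vector n ∈ ℝ³ and every q ∈ ℝ³, (1/N)Σₖ ‖(I − n nᵀ)(pₖ − q)‖² ≥ λ₂ + λ₃; and (ii) if u₁ is a unit eigenvector of A with eigenvalue λ₁, then (1/N)Σₖ ‖(I − u₁u₁ᵀ)(pₖ − p̄)‖² = λ₂ + λ₃. Hence the minimum over all unit directions n and points q of the average squared point-to-edge distance equals λ₂ + λ₃, attained at n = u₁ and q = p̄. -/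
open Matrix

noncomputable section

/-! Splitting `pₖ − q = (pₖ − p̄) + (p̄ − q)`, the cross terms vanish because the `pₖ − p̄` sum to
zero, so the average squared distance to the line through `q` is its value for `q = p̄` plus
`‖(I − n nᵀ)(p̄ − q)‖² ≥ 0`. For `q = p̄` it equals `tr A − nᵀ A n`, and `tr A = λ₁ + λ₂ + λ₃`
while `nᵀ A n ≤ λ₁` for a unit `n`, with equality for an eigenvector of `λ₁`. -/

namespace Matrix

variable {ι κ R : Type*} [Fintype ι]

lemma sum_dotProduct_self_add_of_sum_eq_zero [Fintype κ] [CommSemiring R] {c : κ → ι → R}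
    (hc : ∑ k, c k = 0) (d : ι → R) :
    ∑ k, (c k + d) ⬝ᵥ (c k + d) = ∑ k, c k ⬝ᵥ c k + Fintype.card κ • (d ⬝ᵥ d) := by
  have hcross : ∑ k, c k ⬝ᵥ d = 0 := by rw [← sum_dotProduct, hc, zero_dotProduct]
  simp only [add_dotProduct, dotProduct_add, dotProduct_comm d, Finset.sum_add_distrib, hcross,
    Finset.sum_const, Finset.card_univ]
  abel

section CommRing

variable [CommRing R]

lemma one_sub_vecMulVec_self_mulVec [DecidableEq ι] (n v : ι → R) :
    (1 - vecMulVec n n) *ᵥ v = v - (n ⬝ᵥ v) • n := by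
  rw [sub_mulVec, one_mulVec, vecMulVec_mulVec, op_smul_eq_smul]

lemma dotProduct_self_one_sub_vecMulVec_mulVec [DecidableEq ι] {n : ι → R} (hn : n ⬝ᵥ n = 1)
    (v : ι → R) :
    ((1 - vecMulVec n n) *ᵥ v) ⬝ᵥ ((1 - vecMulVec n n) *ᵥ v) = v ⬝ᵥ v - (n ⬝ᵥ v) ^ 2 := by
  simp only [one_sub_vecMulVec_self_mulVec, dotProduct_sub, sub_dotProduct, dotProduct_smul,
    smul_dotProduct, hn, dotProduct_comm v n, smul_eq_mul]
  ring

lemma dotProduct_vecMulVec_self_mulVec (c n : ι → R) :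
    n ⬝ᵥ vecMulVec c c *ᵥ n = (n ⬝ᵥ c) ^ 2 := by
  rw [vecMulVec_mulVec, op_smul_eq_smul, dotProduct_smul, smul_eq_mul, dotProduct_comm c n, sq]

lemma trace_sub_dotProduct_mulVec_eq_sum [DecidableEq ι] [Fintype κ] (s : R) (c : κ → ι → R)
    {n : ι → R} (hn : n ⬝ᵥ n = 1) :
    (s • ∑ k, vecMulVec (c k) (c k)).trace - n ⬝ᵥ (s • ∑ k, vecMulVec (c k) (c k)) *ᵥ n
      = s * ∑ k, ((1 - vecMulVec n n) *ᵥ c k) ⬝ᵥ ((1 - vecMulVec n n) *ᵥ c k) := by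
  simp only [trace_smul, trace_sum, trace_vecMulVec, smul_mulVec, sum_mulVec, dotProduct_smul,
    dotProduct_sum, dotProduct_vecMulVec_self_mulVec, dotProduct_self_one_sub_vecMulVec_mulVec hn,
    Finset.sum_sub_distrib, smul_eq_mul, mul_sub]

end CommRing

lemma sum_dotProduct_self_mulVec_sub_le {m : Type*} [Fintype m] [Fintype κ] [CommRing R]
    [LinearOrder R] [IsStrictOrderedRing R] (M : Matrix m ι R) {p : κ → ι → R} {p₀ : ι → R}
    (hp₀ : ∑ k, (p k - p₀) = 0) (q : ι → R) :
    ∑ k, (M *ᵥ (p k - p₀)) ⬝ᵥ (M *ᵥ (p k - p₀)) ≤ ∑ k, (M *ᵥ (p k - q)) ⬝ᵥ (M *ᵥ (p k - q)) := by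
  have hsplit := sum_dotProduct_self_add_of_sum_eq_zero
    (c := fun k ↦ M *ᵥ (p k - p₀)) (by rw [← mulVec_sum, hp₀, mulVec_zero]) (M *ᵥ (p₀ - q))
  simp only [← mulVec_add, sub_add_sub_cancel] at hsplit
  rw [hsplit]
  exact le_add_of_nonneg_right (nsmul_nonneg (Fintype.sum_nonneg fun _ ↦ mul_self_nonneg _) _)

lemma IsHermitian.dotProduct_mulVec_le [DecidableEq ι] {A : Matrix ι ι ℝ} (hA : A.IsHermitian)
    {c : ℝ} (hc : ∀ i, hA.eigenvalues i ≤ c) (v : ι → ℝ) : v ⬝ᵥ A *ᵥ v ≤ c * (v ⬝ᵥ v) := by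
  open scoped MatrixOrder in
  have hle : A ≤ algebraMap ℝ _ c := by
    refine le_algebraMap_of_spectrum_le (fun x hx ↦ ?_) hA.isSelfAdjoint
    obtain ⟨i, rfl⟩ := hA.spectrum_real_eq_range_eigenvalues ▸ hx
    exact hc i
  have := hle.dotProduct_mulVec_nonneg v
  simp only [star_trivial, Algebra.algebraMap_eq_smul_one, sub_mulVec, smul_mulVec, one_mulVec,
    dotProduct_sub, dotProduct_smul, smul_eq_mul] at this
  linarith

end Matrix

lemma sum_sub_centroid_eq_zero {K V : Type*} [DivisionRing K] [CharZero K] [AddCommGroup V]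
    [Module K V] {N : ℕ} (hN : N ≠ 0) (p : Fin N → V) :
    ∑ k, (p k - (1 / (N : K)) • ∑ j, p j) = 0 := by
  rw [Finset.sum_sub_distrib, Finset.sum_const, Finset.card_univ, Fintype.card_fin,
    ← Nat.cast_smul_eq_nsmul K, smul_smul, mul_one_div_cancel (Nat.cast_ne_zero.mpr hN),
    one_smul, sub_self]

lemma eigDesc_zero_add_one_add_two {A : Matrix (Fin 3) (Fin 3) ℝ} (hA : A.IsHermitian) :
    eigDesc hA 0 + eigDesc hA 1 + eigDesc hA 2 = ∑ i, hA.eigenvalues i := by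
  rw [← Fin.sum_univ_three (eigDesc hA)]
  exact (Equiv.sum_comp Fin.revPerm _).trans (Equiv.sum_comp (Tuple.sort hA.eigenvalues) _)

lemma eigenvalues_le_eigDesc_zero {A : Matrix (Fin 3) (Fin 3) ℝ} (hA : A.IsHermitian) (i : Fin 3) :
    hA.eigenvalues i ≤ eigDesc hA 0 := by
  obtain ⟨j, rfl⟩ := (Tuple.sort hA.eigenvalues).surjective i
  exact Tuple.monotone_sort hA.eigenvalues (Fin.le_last j)

/-- Equation (8): closed-form elimination of the edge feature parameters.  The minimum
over unit directions `n` and anchor points `q` of the average squared point-to-edge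
distance is `λ₂ + λ₃`, attained at `n = u₁`, `q = p̄`. -/
theorem edge_elimination {N : ℕ} (hN : 0 < N) (p : Fin N → Fin 3 → ℝ)
    (pbar : Fin 3 → ℝ) (hpbar : pbar = (1 / (N : ℝ)) • ∑ k, p k)
    (A : Matrix (Fin 3) (Fin 3) ℝ)
    (hA : A = (1 / (N : ℝ)) • ∑ k, vecMulVec (p k - pbar) (p k - pbar))
    (hAH : A.IsHermitian) :
    (∀ n q : Fin 3 → ℝ, n ⬝ᵥ n = 1 →
        eigDesc hAH 1 + eigDesc hAH 2
          ≤ (1 / (N : ℝ)) * ∑ k,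
              ((1 - vecMulVec n n).mulVec (p k - q)) ⬝ᵥ
                ((1 - vecMulVec n n).mulVec (p k - q)))
    ∧ (∀ u : Fin 3 → ℝ, u ⬝ᵥ u = 1 → A.mulVec u = eigDesc hAH 0 • u →
        (1 / (N : ℝ)) * ∑ k,
            ((1 - vecMulVec u u).mulVec (p k - pbar)) ⬝ᵥ
              ((1 - vecMulVec u u).mulVec (p k - pbar))
          = eigDesc hAH 1 + eigDesc hAH 2) := by
  have hcentred : ∑ k, (p k - pbar) = 0 := hpbar ▸ sum_sub_centroid_eq_zero hN.ne' p
  have hcost (n : Fin 3 → ℝ) (hn : n ⬝ᵥ n = 1) :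
      (1 / (N : ℝ)) * ∑ k,
          ((1 - vecMulVec n n) *ᵥ (p k - pbar)) ⬝ᵥ ((1 - vecMulVec n n) *ᵥ (p k - pbar))
        = eigDesc hAH 1 + eigDesc hAH 2 + (eigDesc hAH 0 - n ⬝ᵥ A *ᵥ n) := by
    rw [← trace_sub_dotProduct_mulVec_eq_sum _ _ hn, ← hA, hAH.trace_eq_sum_eigenvalues]
    simp only [RCLike.ofReal_real_eq_id, id_eq, ← eigDesc_zero_add_one_add_two]
    ring
  refine ⟨fun n q hn ↦ ?_, fun u hu hu₀ ↦ ?_⟩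
  · have hrayleigh := hAH.dotProduct_mulVec_le (eigenvalues_le_eigDesc_zero hAH) n
    rw [hn, mul_one] at hrayleigh
    calc eigDesc hAH 1 + eigDesc hAH 2
        ≤ (1 / (N : ℝ)) * ∑ k,
            ((1 - vecMulVec n n) *ᵥ (p k - pbar)) ⬝ᵥ ((1 - vecMulVec n n) *ᵥ (p k - pbar)) := by
          rw [hcost n hn]
          linarith
      _ ≤ _ := mul_le_mul_of_nonneg_left
          (sum_dotProduct_self_mulVec_sub_le (1 - vecMulVec n n) hcentred q)
          (by positivity)
  · rw [hcost u hu, hu₀, dotProduct_smul, hu, smul_eq_mul, mul_one, sub_self, add_zero]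

end
end
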